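/- Let α > β > γ > 0 be reals, δ ∈ (0,π), ε = 1/√(cos(δ/2)), f₁(m) = ε√(α−γ)·sin(δm/2), h₁(m) = ε√(α−γ)·cos(δm/2), f₂(m) = ε√(α−γ)·cos(δm/2), h₂(m) = ε√(α−γ)·sin(δm/2), and let g₁, g₂ : ℤ → ℝ satisfy g₁(m)g₁(m+1) = (α−β) − f₁(m)f₁(m+1) and g₂(m)g₂(m+1) = f₂(m)f₂(m+1) − (α−β) for all m ∈ ℤ. Let r = (x,y,z) be the associated discrete ellipsoid binet. Fix a sign σ ∈ {1,−1} and k ∈ ℤ, and consider the diagonal polygon v(m) = r(m, σ(k−m)) for m ∈ ℤ. Then the diagonal polygon is a discrete circle lying in the plane Π = {(x,y,z) : √(1/β − 1/α)·x + σ·√(1/γ − 1/β)·z = μ} with μ = (1/cos(δ/2))·√((α−γ)/β)·sin(δk/2): (i) v(m) ∈ Π for all m ∈ ℤ, and (ii) there exist a point c ∈ Π and ρ ∈ ℝ such that ⟨v(m) − c, v(m+1) − c⟩ = ρ for all m ∈ ℤ (when ρ = R² ≥ 0 this says each vertex is the pole of the line through its two neighbours with respect to the circle of centre c and radius R in Π).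 -/

import Mathlib

open Real

noncomputable def pt (x y z : ℝ) : EuclideanSpace ℝ (Fin 3) :=
  (WithLp.equiv 2 (Fin 3 → ℝ)).symm ![x, y, z]

/-!
Put `κ = δk/2`, `t = δ/2`, `e = ε²(α−γ)/2`, `u_m = δm − κ`, and let `C_x, C_y, C_z` be the
square-root factors of the binet. The product-to-sum formulas give
`v(m) = (C_x e (sin κ + sin u_m), C_y Y_m, σ C_z e (sin κ − sin u_m))`, `Y_m = g₁(m) g₂(σ(k−m))`,
a point of `Π` whatever `sin u_m` and `Y_m` are; since `C_x² + C_z² = C_y²`, these two coordinates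
on `Π` are orthogonal, with lengths `e C_y` and `C_y`. The recursions for `g₁`, `g₂` give
`Y_m Y_{m+1} = (D + e cos(κ + u_m + t)) (e cos(κ − u_m − t) − D)` with `D = α − β − e cos t`.
Putting the centre at `sin u = S` with `e S cos t = D sin κ` makes the terms in `sin(u_m + t)` of
`⟨v(m) − c, v(m+1) − c⟩` cancel, which leaves a constant.
-/

@[simp] lemma pt_apply_zero (x y z : ℝ) : pt x y z 0 = x := by simp [pt]

@[simp] lemma pt_apply_two (x y z : ℝ) : pt x y z 2 = z := by simp [pt]

lemma pt_sub (x y z x' y' z' : ℝ) : pt x y z - pt x' y' z' = pt (x - x') (y - y') (z - z') := by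
  ext i; fin_cases i <;> simp [pt]

lemma inner_pt (x y z x' y' z' : ℝ) :
    inner ℝ (pt x y z) (pt x' y' z') = x * x' + y * y' + z * z' := by
  simp [pt, PiLp.inner_apply, Fin.sum_univ_three, mul_comm]

lemma cos_sign_mul {σ : ℤ} (hσ : σ = 1 ∨ σ = -1) (x : ℝ) : cos (σ * x) = cos x := by
  rcases hσ with rfl | rfl <;> simp

lemma sin_sign_mul {σ : ℤ} (hσ : σ = 1 ∨ σ = -1) (x : ℝ) : sin (σ * x) = σ * sin x := by
  rcases hσ with rfl | rfl <;> simp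

lemma sin_mul_sin_succ (δ : ℝ) (m : ℤ) :
    2 * sin (δ * m / 2) * sin (δ * ↑(m + 1) / 2) = cos (δ / 2) - cos (δ * m + δ / 2) := by
  rw [two_mul_sin_mul_sin, ← cos_neg]
  congr 2 <;> push_cast <;> ring

lemma cos_mul_cos_succ (δ : ℝ) (m : ℤ) :
    2 * cos (δ * m / 2) * cos (δ * ↑(m + 1) / 2) = cos (δ / 2) + cos (δ * m + δ / 2) := by
  rw [two_mul_cos_mul_cos, ← cos_neg]
  congr 2 <;> push_cast <;> ring

lemma sin_mul_cos_sign_mul {σ : ℤ} (hσ : σ = 1 ∨ σ = -1) (δ : ℝ) (m k : ℤ) :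
    2 * sin (δ * m / 2) * cos (δ * ↑(σ * (k - m)) / 2)
      = sin (δ * k / 2) + sin (δ * m - δ * k / 2) := by
  rw [show δ * ↑(σ * (k - m)) / 2 = σ * (δ * k / 2 - δ * m / 2) by push_cast; ring,
    cos_sign_mul hσ, two_mul_sin_mul_cos, add_comm]
  congr 2 <;> ring

lemma cos_mul_sin_sign_mul {σ : ℤ} (hσ : σ = 1 ∨ σ = -1) (δ : ℝ) (m k : ℤ) :
    2 * cos (δ * m / 2) * sin (δ * ↑(σ * (k - m)) / 2)
      = σ * (sin (δ * k / 2) - sin (δ * m - δ * k / 2)) := by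
  have h := two_mul_sin_mul_cos (δ * k / 2 - δ * m / 2) (δ * m / 2)
  rw [show δ * k / 2 - δ * m / 2 - δ * m / 2 = -(δ * m - δ * k / 2) by ring, sin_neg,
    show δ * k / 2 - δ * m / 2 + δ * m / 2 = δ * k / 2 by ring] at h
  rw [show δ * ↑(σ * (k - m)) / 2 = σ * (δ * k / 2 - δ * m / 2) by push_cast; ring,
    sin_sign_mul hσ]
  linear_combination (σ : ℝ) * h

lemma mul_succ_eq_of_sin {f g : ℤ → ℝ} {c δ B : ℝ} (hf : ∀ m, f m = c * sin (δ * m / 2))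
    (hg : ∀ m, g m * g (m + 1) = B - f m * f (m + 1)) (m : ℤ) :
    g m * g (m + 1) = B - c ^ 2 / 2 * cos (δ / 2) + c ^ 2 / 2 * cos (δ * m + δ / 2) := by
  rw [hg, hf, hf]
  linear_combination (-c ^ 2 / 2) * sin_mul_sin_succ δ m

lemma sign_mul_succ_eq_of_cos {f g : ℤ → ℝ} {c δ B : ℝ} (hf : ∀ m, f m = c * cos (δ * m / 2))
    (hg : ∀ m, g m * g (m + 1) = f m * f (m + 1) - B) {σ : ℤ} (hσ : σ = 1 ∨ σ = -1) (j : ℤ) :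
    g (σ * (j + 1)) * g (σ * j)
      = c ^ 2 / 2 * cos (δ / 2) + c ^ 2 / 2 * cos (δ * j + δ / 2) - B := by
  have hfg (n : ℤ) :
      g n * g (n + 1) = c ^ 2 / 2 * cos (δ / 2) + c ^ 2 / 2 * cos (δ * n + δ / 2) - B := by
    rw [hg, hf, hf]
    linear_combination (c ^ 2 / 2) * cos_mul_cos_succ δ n
  rcases hσ with rfl | rfl
  · simpa [mul_comm] using hfg j
  · have h := hfg (-j - 1)
    rw [sub_add_cancel, ← cos_neg (δ * _ + _),
      show -(δ * ↑(-j - 1) + δ / 2) = δ * j + δ / 2 by push_cast; ring] at h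
    convert h using 3 <;> ring

lemma circle_trig_identity {e D S t κ : ℝ} (h : e * S * cos t = D * sin κ) (u : ℝ) :
    e ^ 2 * ((sin u - S) * (sin (u + 2 * t) - S))
        + (D + e * cos (κ + (u + t))) * (e * cos (κ - (u + t)) - D)
      = e ^ 2 * (cos κ ^ 2 - sin t ^ 2 + S ^ 2) - D ^ 2 := by
  obtain ⟨a, rfl⟩ : ∃ a, u = a - t := ⟨u + t, by ring⟩
  rw [sub_add_cancel, show a - t + 2 * t = a + t by ring]
  rw [sin_sub, sin_add, cos_add, cos_sub]
  linear_combination (-2 * e * sin a) * h + e ^ 2 * (cos κ ^ 2 - sin t ^ 2) * sin_sq_add_cos_sq a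
    + e ^ 2 * sin a ^ 2 * sin_sq_add_cos_sq t - e ^ 2 * sin a ^ 2 * sin_sq_add_cos_sq κ

lemma ellipsoid_coeff_sq {α β γ : ℝ} (hαβ : β < α) (hβγ : γ < β) (hγ : 0 < γ) :
    √(α / ((α - β) * (α - γ))) ^ 2 + √(γ / ((α - γ) * (β - γ))) ^ 2
      = √(β / ((α - β) * (β - γ))) ^ 2 := by
  have hβ : 0 < β := hγ.trans hβγ
  have hα : 0 < α := hβ.trans hαβ
  have hA : 0 < α - γ := by linarith
  have hB : 0 < α - β := by linarith
  have hC : 0 < β - γ := by linarith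
  rw [sq_sqrt (by positivity), sq_sqrt (by positivity), sq_sqrt (by positivity)]
  field_simp
  ring

lemma plane_normal_mul_coeff {α β γ : ℝ} (hαβ : β < α) (hβγ : γ < β) (hγ : 0 < γ) :
    √(1 / β - 1 / α) * √(α / ((α - β) * (α - γ))) = √((α - γ) / β) / (α - γ) ∧
      √(1 / γ - 1 / β) * √(γ / ((α - γ) * (β - γ))) = √((α - γ) / β) / (α - γ) := by
  have hβ : 0 < β := hγ.trans hβγ
  have hα : 0 < α := hβ.trans hαβ
  have hA : 0 < α - γ := by linarith
  have hB : 0 < α - β := by linarith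
  have hC : 0 < β - γ := by linarith
  have hdiv : √((α - γ) / β) / (α - γ) = √(1 / (β * (α - γ))) := by
    rw [div_eq_iff hA.ne', ← sqrt_sq hA.le, ← sqrt_mul (by positivity), sqrt_sq hA.le]
    congr 1; field_simp
  rw [hdiv, ← sqrt_mul (sub_nonneg.2 (one_div_le_one_div_of_le hβ hαβ.le)),
    ← sqrt_mul (sub_nonneg.2 (one_div_le_one_div_of_le hγ hβγ.le))]
  constructor <;> congr 1 <;> field_simp

noncomputable def planePoint (α β γ : ℝ) (σ : ℤ) (e a s y : ℝ) : EuclideanSpace ℝ (Fin 3) :=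
  pt (√(α / ((α - β) * (α - γ))) * e * (a + s)) (√(β / ((α - β) * (β - γ))) * y)
    (σ * √(γ / ((α - γ) * (β - γ))) * e * (a - s))

lemma planePoint_plane_eq {α β γ : ℝ} (hαβ : β < α) (hβγ : γ < β) (hγ : 0 < γ) {σ : ℤ}
    (hσ : σ = 1 ∨ σ = -1) (e a s y : ℝ) :
    √(1 / β - 1 / α) * planePoint α β γ σ e a s y 0
        + σ * √(1 / γ - 1 / β) * planePoint α β γ σ e a s y 2
      = 2 * e * a * (√((α - γ) / β) / (α - γ)) := by
  obtain ⟨hx, hz⟩ := plane_normal_mul_coeff hαβ hβγ hγ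
  have hσ2 : (σ : ℝ) ^ 2 = 1 := by rcases hσ with rfl | rfl <;> norm_num
  simp only [planePoint, pt_apply_zero, pt_apply_two]
  linear_combination (e * (a + s)) * hx + (e * (a - s)) * hz
    + (√(1 / γ - 1 / β) * √(γ / ((α - γ) * (β - γ))) * e * (a - s)) * hσ2

lemma inner_planePoint_sub_planePoint {α β γ : ℝ} (hαβ : β < α) (hβγ : γ < β) (hγ : 0 < γ)
    {σ : ℤ} (hσ : σ = 1 ∨ σ = -1) (e a s s' S y y' : ℝ) :
    inner ℝ (planePoint α β γ σ e a s y - planePoint α β γ σ e a S 0)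
        (planePoint α β γ σ e a s' y' - planePoint α β γ σ e a S 0)
      = √(β / ((α - β) * (β - γ))) ^ 2 * (e ^ 2 * ((s - S) * (s' - S)) + y * y') := by
  have hσ2 : (σ : ℝ) ^ 2 = 1 := by rcases hσ with rfl | rfl <;> norm_num
  rw [planePoint, planePoint, planePoint, pt_sub, pt_sub, inner_pt]
  linear_combination e ^ 2 * (s - S) * (s' - S) * ellipsoid_coeff_sq hαβ hβγ hγ
    + √(γ / ((α - γ) * (β - γ))) ^ 2 * e ^ 2 * (s - S) * (s' - S) * hσ2

lemma diagonal_vertex_eq {α β γ c δ : ℝ} {f₁ h₁ f₂ h₂ g₁ g₂ : ℤ → ℝ}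
    {r : ℤ → ℤ → EuclideanSpace ℝ (Fin 3)}
    (hr : ∀ m₁ m₂ : ℤ, r m₁ m₂ =
      pt (√(α / ((α - β) * (α - γ))) * f₁ m₁ * f₂ m₂)
        (√(β / ((α - β) * (β - γ))) * g₁ m₁ * g₂ m₂)
        (√(γ / ((α - γ) * (β - γ))) * h₁ m₁ * h₂ m₂))
    (hf₁ : ∀ m : ℤ, f₁ m = c * sin (δ * m / 2)) (hh₁ : ∀ m : ℤ, h₁ m = c * cos (δ * m / 2))
    (hf₂ : ∀ m : ℤ, f₂ m = c * cos (δ * m / 2)) (hh₂ : ∀ m : ℤ, h₂ m = c * sin (δ * m / 2))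
    {σ : ℤ} (hσ : σ = 1 ∨ σ = -1) (k m : ℤ) :
    r m (σ * (k - m)) = planePoint α β γ σ (c ^ 2 / 2) (sin (δ * k / 2))
      (sin (δ * m - δ * k / 2)) (g₁ m * g₂ (σ * (k - m))) := by
  rw [hr, hf₁, hf₂, hh₁, hh₂, planePoint]
  congr 1
  · linear_combination √(α / ((α - β) * (α - γ))) * (c ^ 2 / 2) * sin_mul_cos_sign_mul hσ δ m k
  · ring
  · linear_combination √(γ / ((α - γ) * (β - γ))) * (c ^ 2 / 2) * cos_mul_sin_sign_mul hσ δ m k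

lemma diagonal_consecutive_mul {f₁ g₁ f₂ g₂ : ℤ → ℝ} {c δ B : ℝ}
    (hf₁ : ∀ m, f₁ m = c * sin (δ * m / 2)) (hg₁ : ∀ m, g₁ m * g₁ (m + 1) = B - f₁ m * f₁ (m + 1))
    (hf₂ : ∀ m, f₂ m = c * cos (δ * m / 2)) (hg₂ : ∀ m, g₂ m * g₂ (m + 1) = f₂ m * f₂ (m + 1) - B)
    {σ : ℤ} (hσ : σ = 1 ∨ σ = -1) (k m : ℤ) :
    g₁ m * g₂ (σ * (k - m)) * (g₁ (m + 1) * g₂ (σ * (k - (m + 1))))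
      = (B - c ^ 2 / 2 * cos (δ / 2)
          + c ^ 2 / 2 * cos (δ * k / 2 + (δ * m - δ * k / 2 + δ / 2)))
        * (c ^ 2 / 2 * cos (δ * k / 2 - (δ * m - δ * k / 2 + δ / 2))
          - (B - c ^ 2 / 2 * cos (δ / 2))) := by
  rw [mul_mul_mul_comm, mul_succ_eq_of_sin hf₁ hg₁, show k - m = k - (m + 1) + 1 by ring,
    sign_mul_succ_eq_of_cos hf₂ hg₂ hσ,
    show δ * k / 2 + (δ * m - δ * k / 2 + δ / 2) = δ * m + δ / 2 by ring,
    show δ * k / 2 - (δ * m - δ * k / 2 + δ / 2) = δ * ↑(k - (m + 1)) + δ / 2 by push_cast; ring]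
  ring

theorem diagonal_polygon_is_discrete_circle
    (α β γ : ℝ) (hαβ : β < α) (hβγ : γ < β) (hγ : 0 < γ)
    (δ : ℝ) (hδ : δ ∈ Set.Ioo 0 Real.pi)
    (ε : ℝ) (hεdef : ε = 1 / Real.sqrt (Real.cos (δ / 2)))
    (f₁ h₁ f₂ h₂ : ℤ → ℝ)
    (hf₁ : ∀ m : ℤ, f₁ m = ε * Real.sqrt (α - γ) * Real.sin (δ * m / 2))
    (hh₁ : ∀ m : ℤ, h₁ m = ε * Real.sqrt (α - γ) * Real.cos (δ * m / 2))
    (hf₂ : ∀ m : ℤ, f₂ m = ε * Real.sqrt (α - γ) * Real.cos (δ * m / 2))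
    (hh₂ : ∀ m : ℤ, h₂ m = ε * Real.sqrt (α - γ) * Real.sin (δ * m / 2))
    (g₁ g₂ : ℤ → ℝ)
    (hg₁ : ∀ m : ℤ, g₁ m * g₁ (m + 1) = (α - β) - f₁ m * f₁ (m + 1))
    (hg₂ : ∀ m : ℤ, g₂ m * g₂ (m + 1) = f₂ m * f₂ (m + 1) - (α - β))
    (r : ℤ → ℤ → EuclideanSpace ℝ (Fin 3))
    (hr : ∀ m₁ m₂ : ℤ, r m₁ m₂ =
      pt (Real.sqrt (α / ((α - β) * (α - γ))) * f₁ m₁ * f₂ m₂)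
        (Real.sqrt (β / ((α - β) * (β - γ))) * g₁ m₁ * g₂ m₂)
        (Real.sqrt (γ / ((α - γ) * (β - γ))) * h₁ m₁ * h₂ m₂))
    (σ : ℤ) (hσ : σ = 1 ∨ σ = -1) (k : ℤ)
    (μ : ℝ) (hμ : μ = (1 / Real.cos (δ / 2)) * Real.sqrt ((α - γ) / β)
        * Real.sin (δ * k / 2))
    (P : Set (EuclideanSpace ℝ (Fin 3)))
    (hP : P = {p | Real.sqrt (1 / β - 1 / α) * p 0
        + (σ : ℝ) * Real.sqrt (1 / γ - 1 / β) * p 2 = μ})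
    (v : ℤ → EuclideanSpace ℝ (Fin 3))
    (hv : ∀ m : ℤ, v m = r m (σ * (k - m))) :
    (∀ m : ℤ, v m ∈ P) ∧
    ∃ c ∈ P, ∃ ρ : ℝ, ∀ m : ℤ,
      (inner ℝ (v m - c) (v (m + 1) - c) : ℝ) = ρ := by
  obtain ⟨hδ0, hδπ⟩ := hδ
  have hct : 0 < cos (δ / 2) := cos_pos_of_mem_Ioo ⟨by linarith [pi_pos], by linarith⟩
  have hA : 0 < α - γ := by linarith
  obtain ⟨c, hc⟩ : ∃ c, c = ε * √(α - γ) := ⟨_, rfl⟩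
  simp only [← hc] at hf₁ hh₁ hf₂ hh₂
  have hc2 : c ^ 2 / 2 * cos (δ / 2) = (α - γ) / 2 := by
    rw [hc, hεdef, mul_pow, div_pow, sq_sqrt hct.le, sq_sqrt hA.le]
    field_simp
  have hv_eq (m : ℤ) : v m = planePoint α β γ σ (c ^ 2 / 2) (sin (δ * k / 2))
      (sin (δ * m - δ * k / 2)) (g₁ m * g₂ (σ * (k - m))) := by
    rw [hv, diagonal_vertex_eq hr hf₁ hh₁ hf₂ hh₂ hσ]
  have hplane (s y : ℝ) : planePoint α β γ σ (c ^ 2 / 2) (sin (δ * k / 2)) s y ∈ P := by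
    rw [hP, Set.mem_ofPred_eq, planePoint_plane_eq hαβ hβγ hγ hσ, hμ]
    field_simp
    linear_combination (2 * sin (δ * k / 2) * √((α - γ) / β)) * hc2
  obtain ⟨S, hS⟩ : ∃ S, c ^ 2 / 2 * S * cos (δ / 2)
      = (α - β - c ^ 2 / 2 * cos (δ / 2)) * sin (δ * k / 2) :=
    ⟨(α - β - c ^ 2 / 2 * cos (δ / 2)) * sin (δ * k / 2) / (c ^ 2 / 2 * cos (δ / 2)), by
      rw [mul_right_comm, hc2]; field_simp⟩
  -- `ρ` is left to unification: it is the right-hand side of `circle_trig_identity`.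
  exact ⟨fun m => hv_eq m ▸ hplane _ _, _, hplane S 0, _, fun m => by
    rw [hv_eq, hv_eq, inner_planePoint_sub_planePoint hαβ hβγ hγ hσ,
      diagonal_consecutive_mul hf₁ hg₁ hf₂ hg₂ hσ,
      show δ * ↑(m + 1) - δ * k / 2 = δ * m - δ * k / 2 + 2 * (δ / 2) by push_cast; ring,
      circle_trig_identity hS]⟩
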